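/- Fix δ > 0, b ≥ b₀(δ) (so that exp(2·1.01·(ωb)²/λ) ≤ 1.01), ω = (1+δ)ln b/b, λ = ω(1+ω)^b. Under the broadcast measure ν_h on the complete b-ary tree of height h with N = (b^{h+1}−1)/(b−1) vertices, the average sensitivity of the bottom-up reconstruction function A satisfies S̄_A = E_{σ∼ν_h}[S_A(σ)·1{A(σ)=1}] = O((1.01·ω/λ^{1/2})^h). In particular S̄_A = O(N^{−d}) where d = 1 + ln(λ/(1.01·ωb)²)/(2 ln b). -/

import Mathlib

open Finset

/-- Vertices of the complete `b`-ary tree of height `h`: a vertex at depth `k` is a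
path of `k` child-indices from the root. -/
def Vtx (b h : ℕ) : Type := Σ k : Fin (h + 1), (Fin (k : ℕ) → Fin b)

noncomputable instance (b h : ℕ) : Fintype (Vtx b h) := by unfold Vtx; infer_instance
instance (b h : ℕ) : DecidableEq (Vtx b h) := by unfold Vtx; infer_instance

/-- Depth of a vertex. -/
def Vtx.depth {b h : ℕ} (v : Vtx b h) : ℕ := (v.1 : ℕ)

/-- The root. -/
def treeRoot (b h : ℕ) : Vtx b h :=
  ⟨⟨0, Nat.succ_pos h⟩, fun i => i.elim0⟩

/-- Parent of a vertex (the root is its own parent). -/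
def Vtx.parent {b h : ℕ} (v : Vtx b h) : Vtx b h :=
  ⟨⟨(v.1 : ℕ) - 1, lt_of_le_of_lt (Nat.sub_le _ _) v.1.isLt⟩,
    fun i => v.2 ⟨(i : ℕ), lt_of_lt_of_le i.isLt (Nat.sub_le _ _)⟩⟩

/-- The `j`-th child of a non-leaf vertex. -/
def Vtx.child {b h : ℕ} (v : Vtx b h) (hlt : (v.1 : ℕ) < h) (j : Fin b) : Vtx b h :=
  ⟨⟨(v.1 : ℕ) + 1, by omega⟩,
    fun i => if hi : (i : ℕ) < (v.1 : ℕ) then v.2 ⟨(i : ℕ), hi⟩ else j⟩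

/-- The vertex at depth `d` on the all-`0` path from the root to a fixed leaf. -/
def pathVtx (b h : ℕ) (hb : 0 < b) (d : Fin (h + 1)) : Vtx b h :=
  ⟨d, fun _ => ⟨0, hb⟩⟩

/-- The bottom-up reconstruction rule: a leaf is labeled by its spin; an internal vertex
is labeled occupied iff all its children are labeled unoccupied. -/
def Rfun {b h : ℕ} (σ : Vtx b h → Bool) (v : Vtx b h) : Bool :=
  if hk : (v.1 : ℕ) = h then σ v
  else decide (∀ j : Fin b,
    Rfun σ (v.child (lt_of_le_of_ne (Nat.lt_succ_iff.mp v.1.isLt) hk) j) = false)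
termination_by h - (v.1 : ℕ)
decreasing_by
  all_goals
    have hv := v.1.isLt
    show h - ((v.1 : ℕ) + 1) < h - (v.1 : ℕ)
    omega

/-- The broadcast measure `ν_h` on the complete `b`-ary tree. -/
noncomputable def bcast (b h : ℕ) (ω : ℝ) (σ : Vtx b h → Bool) : ℝ :=
  ∏ v : Vtx b h,
    if (v.1 : ℕ) = 0 then (if σ v then ω / (1 + ω) else 1 - ω / (1 + ω))
    else if σ v.parent then (if σ v then 0 else 1)
    else (if σ v then ω / (1 + ω) else 1 - ω / (1 + ω))

/-- `N = (b^{h+1}−1)/(b−1)`, the number of vertices of the tree. -/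
noncomputable def Nvert (b h : ℕ) : ℝ := ((b : ℝ) ^ (h + 1) - 1) / ((b : ℝ) - 1)

/-- The average sensitivity `S̄_A = E_{σ∼ν_h}[S_A(σ)·1{A(σ)=1}]` of the bottom-up
reconstruction rule `A = R_σ(root)`, where
`S_A(σ) = (1/N)·#{leaves v : A(σ^v) ≠ A(σ)}`. -/
noncomputable def SbarA (b h : ℕ) (ω : ℝ) : ℝ :=
  ∑ σ : Vtx b h → Bool,
    bcast b h ω σ *
      ((1 / Nvert b h) *
        ((Finset.univ.filter (fun v : Vtx b h => (v.1 : ℕ) = h ∧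
          Rfun (Function.update σ v (!σ v)) (treeRoot b h) ≠
            Rfun σ (treeRoot b h))).card : ℝ)) *
      (if Rfun σ (treeRoot b h) = true then 1 else 0)

/-!
Condition on the spin of the root: the `b` subtrees are then independent broadcast processes, so
everything satisfies a recursion in the height. The root is reconstructed as occupied iff all `b`
children are reconstructed as unoccupied, and a leaf is pivotal iff it is pivotal in its own
subtree and the `b - 1` sibling subtrees are all reconstructed as unoccupied.

The probability that a subtree hanging from an unoccupied vertex is reconstructed as unoccupied
stays below `γ = exp(1.01 ω² b / λ) / (1 + ω)`, and the one from an occupied vertex stays above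
`1 - 1.01 ω / λ`. Hence the sibling factor is at most `G = γ^(b-1) ≤ 1.01 ω (1 + ω) / λ`, and the
pivotal probabilities `x_h` (unoccupied parent) and `y_h` (occupied parent) of a leaf satisfy
`x_{h+1} ≤ ε y_h + (1 - ε) G x_h`, `y_{h+1} ≤ G x_h` with `ε = ω / (1 + ω)`. This Fibonacci-type
recursion decays at the rate `r = 1.01 ω / √λ` as soon as `√λ ≥ 101`, which the hypothesis on `b`
guarantees. Averaging over the at most `N` leaves gives `S̄_A ≤ α r^h`, and `r = b^(-d)` together
with `N ≤ 2 b^h` turns this into `O(N^(-d))`.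
-/

namespace Vtx

variable {b h : ℕ}

theorem ext {v w : Vtx b h} (hd : (v.1 : ℕ) = w.1)
    (hs : ∀ i (hi : i < (v.1 : ℕ)), v.2 ⟨i, hi⟩ = w.2 ⟨i, hd ▸ hi⟩) : v = w := by
  obtain ⟨⟨k, hk⟩, f⟩ := v
  obtain ⟨⟨k', hk'⟩, f'⟩ := w
  obtain rfl : k = k' := hd
  obtain rfl : f = f' := funext fun i => hs i i.isLt
  rfl

theorem eq_treeRoot {v : Vtx b h} (hv : (v.1 : ℕ) = 0) : v = treeRoot b h :=
  ext hv fun i hi => by omega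

@[simp] theorem depth_treeRoot : ((treeRoot b h).1 : ℕ) = 0 :=
  rfl

instance : Unique (Vtx b 0) where
  default := treeRoot b 0
  uniq v := eq_treeRoot (by have := v.1.isLt; omega)

/-- The copy of `w` in the `j`-th subtree of the root. -/
def cons (j : Fin b) (w : Vtx b h) : Vtx b (h + 1) :=
  ⟨⟨(w.1 : ℕ) + 1, by have := w.1.isLt; omega⟩, Fin.cons j w.2⟩

def uncons (v : Vtx b (h + 1)) : Option (Fin b × Vtx b h) :=
  if hv : (v.1 : ℕ) = 0 then none
  else some (v.2 ⟨0, by omega⟩,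
    ⟨⟨(v.1 : ℕ) - 1, by have := v.1.isLt; omega⟩,
      fun i => v.2 ⟨i + 1, by have := i.isLt; simp only at this; omega⟩⟩)

@[simp] theorem depth_cons (j : Fin b) (w : Vtx b h) : ((cons j w).1 : ℕ) = (w.1 : ℕ) + 1 :=
  rfl

@[simp] theorem uncons_cons (j : Fin b) (w : Vtx b h) : uncons (cons j w) = some (j, w) := by
  rw [uncons, dif_neg (by simp)]
  exact congrArg some (Prod.ext rfl (ext (by simp) fun i hi => rfl))

@[simp] theorem uncons_treeRoot : uncons (treeRoot b (h + 1)) = none :=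
  dif_pos rfl

theorem cons_injective (j : Fin b) : Function.Injective (cons (h := h) j) := by
  intro v w hvw
  simpa using congrArg uncons hvw

theorem cons_ne_cons {j k : Fin b} (hjk : j ≠ k) (v w : Vtx b h) : cons j v ≠ cons k w := by
  intro hvw
  simpa [hjk] using congrArg uncons hvw

def succEquiv : Option (Fin b × Vtx b h) ≃ Vtx b (h + 1) where
  toFun x := x.elim (treeRoot b (h + 1)) fun p => cons p.1 p.2
  invFun := uncons
  left_inv x := by rcases x with _ | ⟨j, w⟩ <;> simp
  right_inv v := by
    by_cases hv : (v.1 : ℕ) = 0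
    · rw [eq_treeRoot hv, uncons_treeRoot]; rfl
    · rw [uncons, dif_neg hv]
      exact ext (show (v.1 : ℕ) - 1 + 1 = v.1 by omega) fun i hi => by rcases i with _ | i <;> rfl

theorem exists_cons_of_depth_eq {v : Vtx b (h + 1)} (hv : (v.1 : ℕ) = h + 1) :
    ∃ j w, v = cons j w ∧ (w.1 : ℕ) = h := by
  obtain ⟨_ | ⟨j, w⟩, rfl⟩ := succEquiv.surjective v
  · exact absurd hv (show (0 : ℕ) ≠ h + 1 by omega)
  · exact ⟨j, w, rfl, by simpa [succEquiv] using hv⟩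

theorem child_cons (j k : Fin b) (w : Vtx b h) (hw : (w.1 : ℕ) < h)
    (hw' : ((cons j w).1 : ℕ) < h + 1) : (cons j w).child hw' k = cons j (w.child hw k) := by
  refine ext rfl fun i hi => ?_
  rcases i with _ | i
  · rfl
  · by_cases hc : i < (w.1 : ℕ)
    · show (if _ : i + 1 < (w.1 : ℕ) + 1 then w.2 ⟨i, hc⟩ else k)
        = (if _ : i < (w.1 : ℕ) then w.2 ⟨i, hc⟩ else k)
      rw [dif_pos (by omega), dif_pos hc]
    · show (if _ : i + 1 < (w.1 : ℕ) + 1 then _ else k) = (if _ : i < (w.1 : ℕ) then _ else k)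
      rw [dif_neg (by omega), dif_neg hc]

theorem treeRoot_child (j : Fin b) (hr : ((treeRoot b (h + 1)).1 : ℕ) < h + 1) :
    (treeRoot b (h + 1)).child hr j = cons j (treeRoot b h) :=
  ext rfl fun i hi => by
    rcases i with _ | i
    · rfl
    · simp [Vtx.child, treeRoot] at hi

theorem parent_cons (j : Fin b) (w : Vtx b h) (hw : (w.1 : ℕ) ≠ 0) :
    (cons j w).parent = cons j w.parent :=
  ext (show (w.1 : ℕ) + 1 - 1 = (w.1 : ℕ) - 1 + 1 by omega) fun i hi => by
    rcases i with _ | i <;> rfl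

theorem parent_cons_treeRoot (j : Fin b) : (cons j (treeRoot b h)).parent = treeRoot b (h + 1) :=
  eq_treeRoot rfl

end Vtx

section Reconstruction

variable {b h : ℕ}

theorem Rfun_of_depth_eq (σ : Vtx b h → Bool) {v : Vtx b h} (hv : (v.1 : ℕ) = h) :
    Rfun σ v = σ v := by
  rw [Rfun, dif_pos hv]

theorem Rfun_of_depth_ne (σ : Vtx b h → Bool) {v : Vtx b h} (hv : (v.1 : ℕ) ≠ h) :
    Rfun σ v = decide (∀ j : Fin b,
      Rfun σ (v.child (lt_of_le_of_ne (Nat.lt_succ_iff.mp v.1.isLt) hv) j) = false) := by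
  rw [Rfun, dif_neg hv]

def subConfig (σ : Vtx b (h + 1) → Bool) (j : Fin b) : Vtx b h → Bool :=
  fun w => σ (Vtx.cons j w)

theorem Rfun_cons (σ : Vtx b (h + 1) → Bool) (j : Fin b) (w : Vtx b h) :
    Rfun σ (Vtx.cons j w) = Rfun (subConfig σ j) w := by
  induction hn : h - (w.1 : ℕ) generalizing w with
  | zero =>
    have hw : (w.1 : ℕ) = h := by have := w.1.isLt; omega
    rw [Rfun_of_depth_eq σ (by simp [hw]), Rfun_of_depth_eq _ hw]
    rfl
  | succ n ih =>
    have hw : (w.1 : ℕ) < h := by omega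
    rw [Rfun_of_depth_ne σ (by simp; omega), Rfun_of_depth_ne _ hw.ne, decide_eq_decide]
    refine forall_congr' fun k => ?_
    rw [Vtx.child_cons j k w hw, ih (w.child hw k) (by simp [Vtx.child]; omega)]

theorem Rfun_treeRoot_succ (σ : Vtx b (h + 1) → Bool) :
    Rfun σ (treeRoot b (h + 1)) =
      decide (∀ j : Fin b, Rfun (subConfig σ j) (treeRoot b h) = false) := by
  rw [Rfun_of_depth_ne σ (by simp [treeRoot]), decide_eq_decide]
  exact forall_congr' fun j => by rw [Vtx.treeRoot_child, Rfun_cons]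

theorem Rfun_treeRoot_zero (σ : Vtx b 0 → Bool) : Rfun σ (treeRoot b 0) = σ (treeRoot b 0) :=
  Rfun_of_depth_eq σ rfl

def graft (s : Bool) (τ : Fin b → Vtx b h → Bool) (v : Vtx b (h + 1)) : Bool :=
  (Vtx.uncons v).elim s fun p => τ p.1 p.2

@[simp] theorem graft_treeRoot (s : Bool) (τ : Fin b → Vtx b h → Bool) :
    graft s τ (treeRoot b (h + 1)) = s := by
  simp [graft]

@[simp] theorem graft_cons (s : Bool) (τ : Fin b → Vtx b h → Bool) (j : Fin b) (w : Vtx b h) :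
    graft s τ (Vtx.cons j w) = τ j w := by
  simp [graft]

@[simp] theorem subConfig_graft (s : Bool) (τ : Fin b → Vtx b h → Bool) (j : Fin b) :
    subConfig (graft s τ) j = τ j :=
  funext fun w => graft_cons s τ j w

def configEquiv : Bool × (Fin b → Vtx b h → Bool) ≃ (Vtx b (h + 1) → Bool) where
  toFun p := graft p.1 p.2
  invFun σ := (σ (treeRoot b (h + 1)), subConfig σ)
  left_inv p := Prod.ext rfl (funext (subConfig_graft p.1 p.2))
  right_inv σ := funext fun v => by
    obtain ⟨_ | ⟨j, w⟩, rfl⟩ := Vtx.succEquiv.surjective v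
    · exact graft_treeRoot _ _
    · exact graft_cons _ _ j w

end Reconstruction

section Broadcast

variable {b h : ℕ} {ω : ℝ}

noncomputable def bcastKernel (ω : ℝ) (s t : Bool) : ℝ :=
  if s then (if t then 0 else 1) else (if t then ω / (1 + ω) else 1 - ω / (1 + ω))

theorem bcastKernel_nonneg (hω : 0 ≤ ω) (s t : Bool) : 0 ≤ bcastKernel ω s t := by
  have : ω / (1 + ω) ≤ 1 := div_le_one_of_le₀ (by linarith) (by linarith)
  cases s <;> cases t <;> simp [bcastKernel, this]; positivity

theorem sum_bcastKernel (ω : ℝ) (s : Bool) : ∑ t, bcastKernel ω s t = 1 := by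
  cases s <;> simp [bcastKernel]

/-- The broadcast process below a virtual parent of the root with spin `s`; `bcast` is the case
`s = false`. -/
noncomputable def bcastFrom (b h : ℕ) (ω : ℝ) (s : Bool) (σ : Vtx b h → Bool) : ℝ :=
  ∏ v : Vtx b h, bcastKernel ω (if (v.1 : ℕ) = 0 then s else σ v.parent) (σ v)

theorem bcastFrom_nonneg (hω : 0 ≤ ω) (s : Bool) (σ : Vtx b h → Bool) :
    0 ≤ bcastFrom b h ω s σ :=
  Finset.prod_nonneg fun _ _ => bcastKernel_nonneg hω _ _

theorem bcast_eq_bcastFrom_false : bcast b h ω = bcastFrom b h ω false := by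
  funext σ
  refine Finset.prod_congr rfl fun v _ => ?_
  by_cases hv : (v.1 : ℕ) = 0 <;> simp [hv, bcastKernel]

theorem bcastFrom_zero (s : Bool) (σ : Vtx b 0 → Bool) :
    bcastFrom b 0 ω s σ = bcastKernel ω s (σ (treeRoot b 0)) :=
  Fintype.prod_unique _

theorem bcastFrom_graft (s t : Bool) (τ : Fin b → Vtx b h → Bool) :
    bcastFrom b (h + 1) ω s (graft t τ) = bcastKernel ω s t * ∏ j, bcastFrom b h ω t (τ j) := by
  rw [bcastFrom, ← Vtx.succEquiv.prod_comp, Fintype.prod_option, Fintype.prod_prod_type]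
  congr 1
  refine Fintype.prod_congr _ _ fun j => Fintype.prod_congr _ _ fun w => ?_
  show bcastKernel ω (if ((Vtx.cons j w).1 : ℕ) = 0 then s else graft t τ (Vtx.cons j w).parent)
    (graft t τ (Vtx.cons j w)) = _
  by_cases hw : (w.1 : ℕ) = 0
  · rw [Vtx.eq_treeRoot hw]
    simp [Vtx.parent_cons_treeRoot]
  · simp [Vtx.parent_cons j w hw, hw]

theorem sum_bcastFrom_zero_mul (s : Bool) (F : Bool → ℝ) :
    ∑ σ : Vtx b 0 → Bool, bcastFrom b 0 ω s σ * F (σ (treeRoot b 0))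
      = ∑ t, bcastKernel ω s t * F t := by
  simp only [bcastFrom_zero]
  exact (Equiv.funUnique (Vtx b 0) Bool).sum_comp fun t => bcastKernel ω s t * F t

/-- Branching property of the broadcast process: given the root spin `t`, the `b` subtrees are
independent copies of the process started from `t`. -/
theorem sum_bcastFrom_succ_mul_prod (s : Bool) (F : Fin b → (Vtx b h → Bool) → ℝ) :
    ∑ σ : Vtx b (h + 1) → Bool, bcastFrom b (h + 1) ω s σ * ∏ j, F j (subConfig σ j)
      = ∑ t, bcastKernel ω s t * ∏ j, ∑ τ, bcastFrom b h ω t τ * F j τ := by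
  rw [← configEquiv.sum_comp, Fintype.sum_prod_type]
  refine Fintype.sum_congr _ _ fun t => ?_
  simp only [configEquiv, Equiv.coe_fn_mk, bcastFrom_graft, subConfig_graft, mul_assoc,
    ← Finset.prod_mul_distrib, ← Finset.mul_sum, Fintype.prod_sum]

theorem sum_bcastFrom (s : Bool) : ∑ σ : Vtx b h → Bool, bcastFrom b h ω s σ = 1 := by
  induction h generalizing s with
  | zero =>
    simpa only [Pi.one_apply, mul_one, sum_bcastKernel] using
      sum_bcastFrom_zero_mul (b := b) (ω := ω) s 1
  | succ h ih =>
    simpa only [Pi.one_apply, Finset.prod_const_one, mul_one, ih, sum_bcastKernel] using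
      sum_bcastFrom_succ_mul_prod (b := b) (ω := ω) (h := h) s 1

end Broadcast

section Pivotal

variable {b h : ℕ} {ω : ℝ}

noncomputable def probRoot (b h : ℕ) (ω : ℝ) (s a : Bool) : ℝ :=
  ∑ σ : Vtx b h → Bool, bcastFrom b h ω s σ * if Rfun σ (treeRoot b h) = a then 1 else 0

theorem probRoot_nonneg (hω : 0 ≤ ω) (s a : Bool) : 0 ≤ probRoot b h ω s a :=
  Finset.sum_nonneg fun σ _ => mul_nonneg (bcastFrom_nonneg hω s σ) (by positivity)

theorem probRoot_false_add_true (s : Bool) :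
    probRoot b h ω s false + probRoot b h ω s true = 1 := by
  rw [probRoot, probRoot, ← Finset.sum_add_distrib]
  calc _ = ∑ σ : Vtx b h → Bool, bcastFrom b h ω s σ :=
        Fintype.sum_congr _ _ fun σ => by cases Rfun σ (treeRoot b h) <;> simp
    _ = 1 := sum_bcastFrom s

theorem probRoot_le_one (hω : 0 ≤ ω) (s a : Bool) : probRoot b h ω s a ≤ 1 := by
  have := probRoot_false_add_true (b := b) (h := h) (ω := ω) s
  cases a <;> linarith [probRoot_nonneg (b := b) (h := h) hω s false,
    probRoot_nonneg (b := b) (h := h) hω s true]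

theorem probRoot_zero (s a : Bool) : probRoot b 0 ω s a = bcastKernel ω s a := by
  simp only [probRoot, Rfun_treeRoot_zero]
  rw [sum_bcastFrom_zero_mul s fun t => if t = a then 1 else 0]
  simp

theorem probRoot_succ_true (s : Bool) :
    probRoot b (h + 1) ω s true = ∑ t, bcastKernel ω s t * probRoot b h ω t false ^ b := by
  have hind (σ : Vtx b (h + 1) → Bool) :
      (if Rfun σ (treeRoot b (h + 1)) = true then (1 : ℝ) else 0)
        = ∏ j, if Rfun (subConfig σ j) (treeRoot b h) = false then 1 else 0 := by
    rw [Fintype.prod_boole, Rfun_treeRoot_succ]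
    split_ifs <;> simp_all
  simp only [probRoot, hind]
  rw [sum_bcastFrom_succ_mul_prod s fun _ τ => if Rfun τ (treeRoot b h) = false then 1 else 0]
  simp only [Finset.prod_const, Finset.card_univ, Fintype.card_fin]

theorem probRoot_succ_false (s : Bool) :
    probRoot b (h + 1) ω s false = ∑ t, bcastKernel ω s t * (1 - probRoot b h ω t false ^ b) := by
  simp only [mul_sub, mul_one, Finset.sum_sub_distrib, sum_bcastKernel, ← probRoot_succ_true]
  linarith [probRoot_false_add_true (b := b) (h := h + 1) (ω := ω) s]

def IsPivotal (σ : Vtx b h → Bool) (v : Vtx b h) : Prop :=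
  Rfun (Function.update σ v (!σ v)) (treeRoot b h) ≠ Rfun σ (treeRoot b h)

instance (σ : Vtx b h → Bool) (v : Vtx b h) : Decidable (IsPivotal σ v) :=
  inferInstanceAs (Decidable (_ ≠ _))

noncomputable def probPivotal (b h : ℕ) (ω : ℝ) (s : Bool) (v : Vtx b h) : ℝ :=
  ∑ σ : Vtx b h → Bool, bcastFrom b h ω s σ * if IsPivotal σ v then 1 else 0

theorem probPivotal_nonneg (hω : 0 ≤ ω) (s : Bool) (v : Vtx b h) : 0 ≤ probPivotal b h ω s v :=
  Finset.sum_nonneg fun σ _ => mul_nonneg (bcastFrom_nonneg hω s σ) (by positivity)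

theorem probPivotal_zero (s : Bool) : probPivotal b 0 ω s (treeRoot b 0) = 1 := by
  have hpiv (σ : Vtx b 0 → Bool) : IsPivotal σ (treeRoot b 0) := by
    simp [IsPivotal, Rfun_treeRoot_zero]
  simp only [probPivotal, hpiv, if_true, mul_one]
  exact sum_bcastFrom s

theorem decide_forall_update_ne_iff {n : ℕ} (A : Fin n → Bool) (j : Fin n) (x : Bool) :
    decide (∀ k, Function.update A j x k = false) ≠ decide (∀ k, A k = false) ↔
      x ≠ A j ∧ ∀ k ≠ j, A k = false := by
  have hsplit (B : Fin n → Bool) (hB : ∀ k ≠ j, B k = A k) :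
      (∀ k, B k = false) ↔ B j = false ∧ ∀ k ≠ j, A k = false := by
    refine ⟨fun hf => ⟨hf j, fun k hk => hB k hk ▸ hf k⟩, fun ⟨hj, hk⟩ k => ?_⟩
    by_cases hkj : k = j
    · exact hkj ▸ hj
    · exact (hB k hkj).trans (hk k hkj)
  rw [ne_eq, decide_eq_decide, hsplit _ fun k hk => Function.update_of_ne hk x A,
    hsplit A fun _ _ => rfl, Function.update_self]
  by_cases h : ∀ k ≠ j, A k = false <;> cases x <;> cases A j <;> simp [h]

theorem subConfig_update_cons (σ : Vtx b (h + 1) → Bool) (j : Fin b) (w : Vtx b h) (x : Bool) :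
    subConfig (Function.update σ (Vtx.cons j w) x)
      = Function.update (subConfig σ) j (Function.update (subConfig σ j) w x) := by
  funext k
  by_cases hkj : k = j
  · subst hkj
    rw [Function.update_self]
    exact Function.update_comp_eq_of_injective σ (Vtx.cons_injective k) w x
  · rw [Function.update_of_ne hkj]
    exact Function.update_comp_eq_of_forall_ne σ x fun u => Vtx.cons_ne_cons hkj u w

theorem isPivotal_cons_iff (σ : Vtx b (h + 1) → Bool) (j : Fin b) (w : Vtx b h) :
    IsPivotal σ (Vtx.cons j w) ↔
      IsPivotal (subConfig σ j) w ∧ ∀ k ≠ j, Rfun (subConfig σ k) (treeRoot b h) = false := by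
  simp only [IsPivotal, Rfun_treeRoot_succ, subConfig_update_cons,
    Function.apply_update (fun _ τ => Rfun τ (treeRoot b h))]
  exact decide_forall_update_ne_iff (fun k => Rfun (subConfig σ k) (treeRoot b h)) j _

theorem probPivotal_cons (s : Bool) (j : Fin b) (w : Vtx b h) :
    probPivotal b (h + 1) ω s (Vtx.cons j w)
      = ∑ t, bcastKernel ω s t * (probPivotal b h ω t w * probRoot b h ω t false ^ (b - 1)) := by
  set F : Fin b → (Vtx b h → Bool) → ℝ := fun k τ =>
    if k = j then (if IsPivotal τ w then 1 else 0)
    else (if Rfun τ (treeRoot b h) = false then 1 else 0)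
  have hind (σ : Vtx b (h + 1) → Bool) :
      (if IsPivotal σ (Vtx.cons j w) then (1 : ℝ) else 0) = ∏ k, F k (subConfig σ k) := by
    rw [Fintype.prod_eq_mul_prod_compl j]
    dsimp only [F]
    rw [if_pos rfl, Finset.prod_ite_of_false (by simp), Finset.prod_boole]
    split_ifs <;> simp_all [isPivotal_cons_iff]
  simp only [probPivotal, hind]
  rw [sum_bcastFrom_succ_mul_prod s F]
  refine Fintype.sum_congr _ _ fun t => ?_
  rw [Fintype.prod_eq_mul_prod_compl j]
  simp [F, probRoot, Finset.prod_ite_of_false, Finset.card_compl]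

end Pivotal

section Sensitivity

variable {b h : ℕ} {ω : ℝ}

theorem card_Vtx (hb : b ≠ 1) : (Fintype.card (Vtx b h) : ℝ) = Nvert b h := by
  have hcard : Fintype.card (Vtx b h) = ∑ k : Fin (h + 1), b ^ (k : ℕ) := by
    simp [Vtx, Fintype.card_sigma]
  rw [hcard, Nvert, Nat.cast_sum, Fin.sum_univ_eq_sum_range (fun k => ((b ^ k : ℕ) : ℝ)),
    ← geom_sum_eq (by exact_mod_cast hb)]
  push_cast
  rfl

theorem Nvert_pos (hb : b ≠ 1) : 0 < Nvert b h := by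
  rw [← card_Vtx hb]
  exact_mod_cast Fintype.card_pos_iff.mpr ⟨treeRoot b h⟩

/-- Summing over the leaves first: there are at most `N` of them. -/
theorem SbarA_le_of_probPivotal_le (hb : b ≠ 1) (hω : 0 ≤ ω) {X : ℝ} (hX0 : 0 ≤ X)
    (hX : ∀ v : Vtx b h, (v.1 : ℕ) = h → probPivotal b h ω false v ≤ X) :
    SbarA b h ω ≤ X := by
  have hN := Nvert_pos (h := h) hb
  set piv : Vtx b h → (Vtx b h → Bool) → ℝ := fun v σ =>
    bcast b h ω σ * if (v.1 : ℕ) = h ∧ IsPivotal σ v then 1 else 0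
  have hpiv (v : Vtx b h) : ∑ σ, piv v σ ≤ X := by
    by_cases hv : (v.1 : ℕ) = h
    · simpa [piv, hv, bcast_eq_bcastFrom_false, probPivotal] using hX v hv
    · simpa [piv, hv] using hX0
  calc SbarA b h ω ≤ ∑ σ, (1 / Nvert b h) * ∑ v, piv v σ := by
        refine Finset.sum_le_sum fun σ _ => ?_
        have hσ : 0 ≤ bcast b h ω σ := by
          rw [bcast_eq_bcastFrom_false]; exact bcastFrom_nonneg hω false σ
        have hcount : bcast b h ω σ * ((1 / Nvert b h) * (#(Finset.univ.filter fun v : Vtx b h =>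
            (v.1 : ℕ) = h ∧ IsPivotal σ v) : ℝ)) = (1 / Nvert b h) * ∑ v, piv v σ := by
          simp only [piv, Finset.natCast_card_filter, ← Finset.mul_sum]
          ring
        rw [← hcount]
        refine mul_le_of_le_one_right (by positivity) ?_
        split_ifs <;> norm_num
    _ = (1 / Nvert b h) * ∑ v, ∑ σ, piv v σ := by rw [← Finset.mul_sum, Finset.sum_comm]
    _ ≤ (1 / Nvert b h) * ∑ _v : Vtx b h, X := by gcongr with v; exact hpiv v
    _ = X := by
        rw [Finset.sum_const, Finset.card_univ, nsmul_eq_mul, card_Vtx hb]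
        field_simp

end Sensitivity

section Recursions

variable {b : ℕ} {ω : ℝ}

/-- `γ = exp (ω b η) / (1 + ω)` is chosen so that `(1 + ω b η) / (1 + ω) ≤ γ`, which is what one
step of the recursion for `probRoot` needs. -/
theorem probRoot_bounds (hω : 0 ≤ ω) {η : ℝ} (hη : 0 ≤ η)
    (hγ : (Real.exp (ω * b * η) / (1 + ω)) ^ b ≤ η) (h : ℕ) :
    probRoot b h ω false false ≤ Real.exp (ω * b * η) / (1 + ω) ∧
      1 - probRoot b h ω true false ≤ η := by
  have hω1 : 0 < 1 + ω := by linarith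
  have hkernel : bcastKernel ω false false = 1 / (1 + ω) := by
    simp [bcastKernel]; field_simp; ring
  induction h with
  | zero =>
    simp only [probRoot_zero, hkernel]
    refine ⟨by gcongr; exact Real.one_le_exp (by positivity), by simp [bcastKernel, hη]⟩
  | succ h ih =>
    obtain ⟨hg, hq⟩ := ih
    set g := probRoot b h ω false false
    set q := probRoot b h ω true false
    have hg0 : 0 ≤ g := probRoot_nonneg hω false false
    have hq0 : 0 ≤ q := probRoot_nonneg hω true false
    refine ⟨?_, ?_⟩
    · have hbern : 1 - q ^ b ≤ b * η := by
        have := one_add_mul_le_pow (show (-2 : ℝ) ≤ q - 1 by linarith) b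
        rw [add_sub_cancel] at this
        nlinarith
      rw [probRoot_succ_false, Fintype.sum_bool, hkernel]
      simp only [bcastKernel, Bool.false_eq_true, if_true, if_false]
      calc ω / (1 + ω) * (1 - q ^ b) + 1 / (1 + ω) * (1 - g ^ b)
          ≤ ω / (1 + ω) * (b * η) + 1 / (1 + ω) * 1 :=
            add_le_add (mul_le_mul_of_nonneg_left hbern (by positivity))
              (mul_le_mul_of_nonneg_left (by linarith [pow_nonneg hg0 b]) (by positivity))
        _ = (ω * b * η + 1) / (1 + ω) := by ring
        _ ≤ Real.exp (ω * b * η) / (1 + ω) := by gcongr; exact Real.add_one_le_exp _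
    · rw [probRoot_succ_false, Fintype.sum_bool]
      simp only [bcastKernel, Bool.false_eq_true, if_true, if_false]
      linarith [pow_le_pow_left₀ hg0 hg b]

/-- Weights making `(α r ^ h, β r ^ h)` a supersolution of the linear recursion
`x' = ε y + (1 - ε) G x`, `y' = G x` satisfied by the pivotal probabilities. -/
theorem exists_supersolution_weights {ε G r : ℝ} (hG : 0 < G) (hr : 0 < r)
    (hrate : (1 - ε) * G + ε * G / r ≤ r) :
    ∃ α β : ℝ, 1 ≤ α ∧ 1 ≤ β ∧ ε * β + (1 - ε) * G * α ≤ r * α ∧ G * α ≤ r * β := by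
  set α := max 1 (r / G)
  have hα : 0 < α := lt_of_lt_of_le one_pos (le_max_left _ _)
  refine ⟨α, G * α / r, le_max_left _ _, ?_, ?_, by field_simp; rfl⟩
  · rw [le_div_iff₀ hr, one_mul, ← div_le_iff₀' hG]
    exact le_max_right _ _
  · calc ε * (G * α / r) + (1 - ε) * G * α = ((1 - ε) * G + ε * G / r) * α := by ring
      _ ≤ r * α := by gcongr

theorem probPivotal_le (hω : 0 ≤ ω) {G r α β : ℝ}
    (hG : ∀ h, probRoot b h ω false false ^ (b - 1) ≤ G) (hr : 0 ≤ r) (hα : 1 ≤ α) (hβ : 1 ≤ β)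
    (hstep : ω / (1 + ω) * β + (1 - ω / (1 + ω)) * G * α ≤ r * α) (hstep' : G * α ≤ r * β)
    (h : ℕ) (v : Vtx b h) (hv : (v.1 : ℕ) = h) :
    probPivotal b h ω false v ≤ α * r ^ h ∧ probPivotal b h ω true v ≤ β * r ^ h := by
  induction h with
  | zero =>
    rw [Vtx.eq_treeRoot hv, probPivotal_zero, probPivotal_zero]
    simpa using ⟨hα, hβ⟩
  | succ h ih =>
    obtain ⟨j, w, rfl, hw⟩ := Vtx.exists_cons_of_depth_eq hv
    obtain ⟨ihf, iht⟩ := ih w hw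
    have hq : probRoot b h ω true false ^ (b - 1) ≤ 1 :=
      pow_le_one₀ (probRoot_nonneg hω _ _) (probRoot_le_one hω _ _)
    have hGf := hG h
    have hq0 : 0 ≤ probRoot b h ω true false ^ (b - 1) := pow_nonneg (probRoot_nonneg hω _ _) _
    have hε1 : ω / (1 + ω) ≤ 1 := div_le_one_of_le₀ (by linarith) (by linarith)
    rw [probPivotal_cons, probPivotal_cons, Fintype.sum_bool, Fintype.sum_bool]
    simp only [bcastKernel, Bool.false_eq_true, if_true, if_false, zero_mul, one_mul, zero_add]
    have hpiv : probPivotal b h ω false w * probRoot b h ω false false ^ (b - 1) ≤ α * r ^ h * G :=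
      mul_le_mul ihf hGf (pow_nonneg (probRoot_nonneg hω _ _) _) (by positivity)
    constructor
    · calc _ ≤ ω / (1 + ω) * (β * r ^ h * 1) + (1 - ω / (1 + ω)) * (α * r ^ h * G) := by
            gcongr
        _ = (ω / (1 + ω) * β + (1 - ω / (1 + ω)) * G * α) * r ^ h := by ring
        _ ≤ r * α * r ^ h := by gcongr
        _ = α * r ^ (h + 1) := by ring
    · calc _ ≤ α * r ^ h * G := hpiv
        _ = G * α * r ^ h := by ring
        _ ≤ r * β * r ^ h := by gcongr
        _ = β * r ^ (h + 1) := by ring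

end Recursions

section Regime

open Real

theorem lam_ge_of_exp_le {x lam : ℝ} (hlam : 0 < lam)
    (h : exp (2 * 1.01 * x ^ 2 / lam) ≤ 1.01) : 202 * x ^ 2 ≤ lam := by
  have hlog : 2 * 1.01 * x ^ 2 / lam ≤ 0.01 := by
    calc _ ≤ log 1.01 := by simpa using log_le_log (exp_pos _) h
      _ ≤ 1.01 - 1 := log_le_sub_one_of_pos (by norm_num)
      _ = 0.01 := by norm_num
  rw [div_le_iff₀ hlam] at hlog
  linarith

/-- `exp x < 404 x` on `[log 2, 8)`: by convexity `exp` lies below its chord there, and the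
chord lies below `404 x` at both ends. -/
theorem eight_le_of_mul_le_exp {x : ℝ} (hx : log 2 ≤ x) (h : 404 * x ≤ exp x) : 8 ≤ x := by
  by_contra! hlt
  have hlog2 : 0.6931471803 < log 2 := log_two_gt_d9
  have hexp8 : exp 8 < 3232 := by
    have : exp 1 ^ 8 < 2.7182818286 ^ 8 :=
      pow_lt_pow_left₀ exp_one_lt_d9 (exp_pos 1).le (by norm_num)
    rw [← exp_nat_mul] at this
    norm_num at this
    linarith
  set t := (x - log 2) / (8 - log 2)
  have ht0 : 0 ≤ t := div_nonneg (by linarith) (by linarith)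
  have ht1 : t < 1 := (div_lt_one (by linarith)).2 (by linarith)
  have hxt : (1 - t) * log 2 + t * 8 = x := by
    have : 8 - log 2 ≠ 0 := by linarith
    simp only [t]; field_simp; ring
  have hconv := convexOn_exp.2 (Set.mem_univ (log 2)) (Set.mem_univ 8) (by linarith) ht0
    (by ring : 1 - t + t = 1)
  simp only [smul_eq_mul, hxt, exp_log two_pos] at hconv
  nlinarith

theorem regime_facts {δ : ℝ} (hδ : 0 < δ) {b : ℕ} (hb : 2 ≤ b) {ω lam : ℝ}
    (hω : ω = (1 + δ) * log b / b) (hlam : lam = ω * (1 + ω) ^ b)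
    (hcond : exp (2 * 1.01 * (ω * b) ^ 2 / lam) ≤ 1.01) :
    0 < ω ∧ 101 ^ 2 ≤ lam ∧ (1.01 * ω) ^ 2 ≤ lam := by
  have hb2 : (2 : ℝ) ≤ b := by exact_mod_cast hb
  have hlog2 : log 2 ≤ log b := log_le_log two_pos hb2
  have hω0 : 0 < ω := by rw [hω]; have := log_pos (by linarith : (1 : ℝ) < b); positivity
  have hlam0 : 0 < lam := by rw [hlam]; positivity
  have h202 := lam_ge_of_exp_le hlam0 hcond
  have hωb : ω * b = (1 + δ) * log b := by rw [hω]; field_simp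
  have h2ω : 2 * ω ≤ ω * b := by nlinarith
  have hlam_le : lam ≤ ω * exp (ω * b) := by
    rw [hlam]
    gcongr
    calc (1 + ω) ^ b ≤ exp ω ^ b := by gcongr; linarith [add_one_le_exp ω]
      _ = exp (ω * b) := by rw [← exp_nat_mul, mul_comm]
  have h8 : 8 ≤ ω * b := by
    refine eight_le_of_mul_le_exp (by nlinarith [log_nonneg one_le_two]) ?_
    nlinarith
  refine ⟨hω0, by nlinarith, by nlinarith⟩

end Regime

section Rate

open Real

/-- `101` is where `1 / 101 + 1 / 1.01 = 1`. -/
theorem pivotal_rate {ω lam G : ℝ} (hω : 0 < ω) (hlam : 101 ^ 2 ≤ lam)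
    (hG : G ≤ 1.01 * ω / lam * (1 + ω)) :
    (1 - ω / (1 + ω)) * G + ω / (1 + ω) * G / (1.01 * ω / √lam) ≤ 1.01 * ω / √lam := by
  have hs : 101 ≤ √lam := le_sqrt_of_sq_le hlam
  have hs0 : 0 < √lam := by linarith
  have hu : 0 < 1 + ω := by linarith
  have hGu : G / (1 + ω) ≤ 1.01 * ω / √lam ^ 2 := by
    rw [sq_sqrt (by linarith), div_le_iff₀ hu]; exact hG
  have hinv : 1.01 / √lam ≤ 0.01 := by rw [div_le_iff₀ hs0]; linarith
  calc (1 - ω / (1 + ω)) * G + ω / (1 + ω) * G / (1.01 * ω / √lam)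
      = G / (1 + ω) * (1 + √lam / 1.01) := by field_simp; ring
    _ ≤ 1.01 * ω / √lam ^ 2 * (1 + √lam / 1.01) := by gcongr
    _ = ω / √lam * (1.01 / √lam + 1) := by field_simp
    _ ≤ ω / √lam * 1.01 := by gcongr; linarith
    _ = 1.01 * ω / √lam := by ring

theorem exists_SbarA_le_pow {b : ℕ} (hb : 1 < b) {ω lam : ℝ} (hω : 0 < ω)
    (hlam : lam = ω * (1 + ω) ^ b) (hlam101 : 101 ^ 2 ≤ lam)
    (hexp : exp (1.01 * (ω * b) ^ 2 / lam) ≤ 1.01) :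
    ∃ α > 0, ∀ h, SbarA b h ω ≤ α * (1.01 * ω / √lam) ^ h := by
  have hlam0 : 0 < lam := lt_of_lt_of_le (by norm_num) hlam101
  set η := 1.01 * ω / lam
  set γ := exp (ω * b * η) / (1 + ω)
  have hγ : γ ^ b ≤ η := by
    have hpow : (1 + ω) ^ b = lam / ω := by rw [hlam]; field_simp
    have hexp_pow : exp (ω * b * η) ^ b = exp (1.01 * (ω * b) ^ 2 / lam) := by
      rw [← exp_nat_mul]; congr 1; simp only [η]; ring
    calc γ ^ b = exp (1.01 * (ω * b) ^ 2 / lam) * (ω / lam) := by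
          rw [div_pow, hexp_pow, hpow]; field_simp
      _ ≤ 1.01 * (ω / lam) := by gcongr
      _ = η := by ring
  have hγ_ge : 1 / (1 + ω) ≤ γ := by
    simp only [γ]; gcongr; exact one_le_exp (by positivity)
  have hγ0 : 0 < γ := lt_of_lt_of_le (by positivity) hγ_ge
  have hG : γ ^ (b - 1) ≤ η * (1 + ω) := by
    have hsplit : γ ^ (b - 1) * γ = γ ^ b := by rw [← pow_succ, Nat.sub_add_cancel hb.le]
    rw [div_le_iff₀ (by positivity)] at hγ_ge
    nlinarith [pow_pos hγ0 (b - 1)]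
  have hroot (h : ℕ) : probRoot b h ω false false ^ (b - 1) ≤ γ ^ (b - 1) :=
    pow_le_pow_left₀ (probRoot_nonneg hω.le _ _) (probRoot_bounds hω.le (by positivity) hγ h).1 _
  obtain ⟨α, β, hα, hβ, hstep, hstep'⟩ := exists_supersolution_weights (by positivity)
    (by positivity) (pivotal_rate hω hlam101 hG)
  refine ⟨α, by linarith, fun h => SbarA_le_of_probPivotal_le hb.ne' hω.le (by positivity)
    fun v hv => (probPivotal_le hω.le hroot (by positivity) hα hβ hstep hstep' h v hv).1⟩

end Rate

section VertexCount

open Real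

theorem Nvert_le {b : ℕ} (hb : 2 ≤ b) (h : ℕ) : Nvert b h ≤ 2 * (b : ℝ) ^ h := by
  have hb2 : (2 : ℝ) ≤ b := by exact_mod_cast hb
  have hbh : (1 : ℝ) ≤ (b : ℝ) ^ h := one_le_pow₀ (by linarith)
  rw [Nvert, div_le_iff₀ (by linarith), pow_succ]
  nlinarith

theorem pow_le_rpow_mul_Nvert_rpow {b : ℕ} (hb : 2 ≤ b) {r : ℝ} (hr0 : 0 < r) (hr1 : r ≤ 1)
    (h : ℕ) : r ^ h ≤ 2 ^ (-(log r / log b)) * Nvert b h ^ (log r / log b) := by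
  have hb1 : (1 : ℝ) < b := by exact_mod_cast hb
  have hlogb : 0 < log b := log_pos hb1
  set e := log r / log b
  have he : e ≤ 0 := div_nonpos_of_nonpos_of_nonneg (log_nonpos hr0.le hr1) hlogb.le
  have hbh : (0 : ℝ) < (b : ℝ) ^ h := by positivity
  have hrh : r ^ h = ((b : ℝ) ^ h) ^ e := by
    rw [rpow_def_of_pos hbh, log_pow, ← exp_log hr0, ← exp_nat_mul]
    congr 1
    simp only [e]
    field_simp
  calc r ^ h = 2 ^ (-e) * (2 ^ e * ((b : ℝ) ^ h) ^ e) := by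
        rw [← mul_assoc, ← rpow_add two_pos, neg_add_cancel, rpow_zero, one_mul, hrh]
    _ = 2 ^ (-e) * (2 * (b : ℝ) ^ h) ^ e := by rw [mul_rpow zero_le_two hbh.le]
    _ ≤ 2 ^ (-e) * Nvert b h ^ e :=
        mul_le_mul_of_nonneg_left
          (rpow_le_rpow_of_nonpos (Nvert_pos (by omega)) (Nvert_le hb h) he) (by positivity)

theorem exponent_eq_log_div_log {b : ℕ} (hb : 1 < b) {ω lam : ℝ} (hω : 0 < ω) (hlam : 0 < lam) :
    -(1 + log (lam / (1.01 * ω * b) ^ 2) / (2 * log b)) = log (1.01 * ω / √lam) / log b := by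
  have hlogb : 0 < log b := log_pos (by exact_mod_cast hb)
  have hb0 : (0 : ℝ) < b := by positivity
  rw [log_div hlam.ne' (by positivity), log_pow, log_mul (by positivity) hb0.ne',
    log_div (by positivity) (by positivity), log_sqrt hlam.le]
  field_simp
  ring

end VertexCount

open Real in
/-- In the reconstruction regime `ω = (1+δ)ln b/b` (with `b ≥ b₀(δ)`, expressed by the
hypothesis `exp(2·1.01·(ωb)²/λ) ≤ 1.01`), the average sensitivity of the bottom-up
reconstruction rule satisfies `S̄_A = O((1.01·ω/√λ)^h) = O(N^{−d})`
with `d = 1 + ln(λ/(1.01·ωb)²)/(2 ln b)`. -/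
theorem stmt18 (δ : ℝ) (hδ : 0 < δ) (b : ℕ) (hb : 2 ≤ b) (ω lam : ℝ)
    (hω : ω = (1 + δ) * Real.log b / b) (hlam : lam = ω * (1 + ω) ^ b)
    (hcond : Real.exp (2 * 1.01 * (ω * b) ^ 2 / lam) ≤ 1.01) :
    ∃ C : ℝ, 0 < C ∧ ∀ h : ℕ, 1 ≤ h →
      SbarA b h ω ≤ C * (1.01 * ω / Real.sqrt lam) ^ h ∧
      SbarA b h ω ≤
        C * Nvert b h ^
          (-(1 + Real.log (lam / (1.01 * ω * (b : ℝ)) ^ 2) / (2 * Real.log b))) := by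
  obtain ⟨hω0, hlam101, hlam_ge⟩ := regime_facts hδ hb hω hlam hcond
  have hlam0 : 0 < lam := lt_of_lt_of_le (by norm_num) hlam101
  have hexp : exp (1.01 * (ω * b) ^ 2 / lam) ≤ 1.01 :=
    (exp_le_exp.2 (by gcongr; norm_num)).trans hcond
  obtain ⟨α, hα, hS⟩ := exists_SbarA_le_pow hb hω0 hlam hlam101 hexp
  set r := 1.01 * ω / √lam
  have hr0 : 0 < r := by positivity
  have hr1 : r ≤ 1 := div_le_one_of_le₀ (le_sqrt_of_sq_le hlam_ge) (sqrt_nonneg _)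
  have h2 : 1 ≤ (2 : ℝ) ^ (-(log r / log b)) := by
    refine one_le_rpow one_le_two (neg_nonneg.2 (div_nonpos_of_nonpos_of_nonneg ?_ ?_))
    · exact log_nonpos hr0.le hr1
    · exact log_nonneg (Nat.one_le_cast.2 (by omega))
  refine ⟨α * 2 ^ (-(log r / log b)), by positivity, fun h _ => ⟨?_, ?_⟩⟩
  · exact (hS h).trans (by gcongr; exact le_mul_of_one_le_right hα.le h2)
  · rw [exponent_eq_log_div_log hb hω0 hlam0, mul_assoc]
    exact (hS h).trans (by gcongr; exact pow_le_rpow_mul_Nvert_rpow hb hr0 hr1 h)
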